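/- arXiv:1903.04773 — 8 statements merged into one kernel-verified Lean document; each statement's English description precedes it below -/
import Mathlib

section
/- Let n ≥ 2, 1 ≤ s ≤ n, and 2s−n ≤ k ≤ s be integers, and let K be a field. Then every matrix y ∈ M_n(K) of rank k can be written as y = y₁y₂ where y₁ and y₂ are matrices in M_n(K) of rank exactly s. -/
/-!
Gaussian elimination writes `y = P * diagonal d * Q` with `P`, `Q` invertible, and `d` has
exactly `k` nonzero entries. Choose index sets `S`, `T` of size `s` with `S ∩ T = support d`;
there is room for them because `2 * s - k ≤ n`. Then `d = d₁ * d₂` with `support d₁ = S` and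
`support d₂ = T`, so `y = (P * diagonal d₁) * (diagonal d₂ * Q)` with both factors of rank `s`.
-/

open Matrix Function

theorem Set.exists_inter_eq_ncard_eq_ncard_eq {α : Type*} [Finite α] {U : Set α} {s : ℕ}
    (hUs : U.ncard ≤ s) (hs : 2 * s ≤ U.ncard + Nat.card α) :
    ∃ S T : Set α, S ∩ T = U ∧ S.ncard = s ∧ T.ncard = s := by
  obtain ⟨A, hAU, hA⟩ := Uᶜ.exists_subset_card_eq (n := 2 * (s - U.ncard))
    (by rw [ncard_compl]; omega)
  obtain ⟨B, hBA, hB⟩ := A.exists_subset_card_eq (n := s - U.ncard) (by omega)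
  have hUA : Disjoint U A := subset_compl_iff_disjoint_left.mp hAU
  refine ⟨U ∪ B, U ∪ (A \ B), ?_, ?_, ?_⟩
  · rw [← union_inter_distrib_left, inter_sdiff_self, union_empty]
  · rw [ncard_union_eq (hUA.mono_right hBA)]
    omega
  · rw [ncard_union_eq (hUA.mono_right sdiff_subset), ncard_sdiff hBA]
    omega

theorem Function.exists_mul_eq_support_eq_support_eq {ι M₀ : Type*} [MulZeroOneClass M₀]
    [NeZero (1 : M₀)] {d : ι → M₀} {S T : Set ι} (h : support d = S ∩ T) :
    ∃ d₁ d₂ : ι → M₀, d₁ * d₂ = d ∧ support d₁ = S ∧ support d₂ = T := by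
  classical
  have hd : ∀ i, d i ≠ 0 ↔ i ∈ S ∧ i ∈ T := fun i => Set.ext_iff.mp h i
  refine ⟨T.piecewise d (S.indicator 1), T.indicator 1, ?_, ?_, ?_⟩
  · ext i
    by_cases hi : i ∈ T
    · simp [hi]
    · simpa [hi, eq_comm] using (hd i).not.mpr (by tauto)
  · ext i
    by_cases hi : i ∈ T <;> simp [hi, hd]
  · ext i
    simp

theorem Matrix.rank_diagonal_eq_ncard_support {ι K : Type*} [Fintype ι] [DecidableEq ι]
    [Field K] (d : ι → K) : (diagonal d).rank = (support d).ncard := by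
  classical
  rw [rank_diagonal, ← Nat.card_eq_fintype_card]
  rfl

theorem Matrix.exists_eq_mul_rank_eq_rank_eq {ι K : Type*} [Fintype ι] [DecidableEq ι]
    [Field K] (M : Matrix ι ι K) {s : ℕ} (hMs : M.rank ≤ s)
    (hs : 2 * s ≤ M.rank + Fintype.card ι) :
    ∃ A B : Matrix ι ι K, A.rank = s ∧ B.rank = s ∧ M = A * B := by
  obtain ⟨L, L', d, rfl⟩ := Pivot.exists_list_transvec_mul_diagonal_mul_list_transvec M
  set P := (L.map TransvectionStruct.toMatrix).prod
  set Q := (L'.map TransvectionStruct.toMatrix).prod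
  have hP : IsUnit P.det := by simp [P, TransvectionStruct.det_toMatrix_prod]
  have hQ : IsUnit Q.det := by simp [Q, TransvectionStruct.det_toMatrix_prod]
  have hrank : (P * diagonal d * Q).rank = (support d).ncard := by
    rw [rank_mul_eq_left_of_isUnit_det _ _ hQ, rank_mul_eq_right_of_isUnit_det _ _ hP,
      rank_diagonal_eq_ncard_support]
  rw [hrank] at hMs hs
  rw [← Nat.card_eq_fintype_card] at hs
  obtain ⟨S, T, hST, hS, hT⟩ := Set.exists_inter_eq_ncard_eq_ncard_eq hMs hs
  obtain ⟨d₁, d₂, rfl, rfl, rfl⟩ := exists_mul_eq_support_eq_support_eq hST.symm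
  refine ⟨P * diagonal d₁, diagonal d₂ * Q, ?_, ?_, ?_⟩
  · rw [rank_mul_eq_right_of_isUnit_det _ _ hP, rank_diagonal_eq_ncard_support, hS]
  · rw [rank_mul_eq_left_of_isUnit_det _ _ hQ, rank_diagonal_eq_ncard_support, hT]
  · rw [Matrix.mul_assoc P (diagonal d₁), ← Matrix.mul_assoc (diagonal d₁),
      diagonal_mul_diagonal, ← Matrix.mul_assoc]
    rfl

theorem stmt_0_general {n s k : ℕ} (K : Type*) [Field K]
    (hk1 : 2 * s ≤ k + n) (hk2 : k ≤ s)
    (y : Matrix (Fin n) (Fin n) K) (hy : y.rank = k) :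
    ∃ y₁ y₂ : Matrix (Fin n) (Fin n) K, y₁.rank = s ∧ y₂.rank = s ∧ y = y₁ * y₂ := by
  subst hy
  exact y.exists_eq_mul_rank_eq_rank_eq hk2 (by rwa [Fintype.card_fin])

theorem stmt_0 {n s k : ℕ} (K : Type*) [Field K]
    (hn : 2 ≤ n) (hs1 : 1 ≤ s) (hsn : s ≤ n) (hk1 : 2 * s ≤ k + n) (hk2 : k ≤ s)
    (y : Matrix (Fin n) (Fin n) K) (hy : y.rank = k) :
    ∃ y₁ y₂ : Matrix (Fin n) (Fin n) K, y₁.rank = s ∧ y₂.rank = s ∧ y = y₁ * y₂ :=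
  stmt_0_general K hk1 hk2 y hy
end

section
/- Let n ≥ 2 and 0 ≤ s ≤ n/2 be integers, and let K be a field. Then every matrix y ∈ M_n(K) of rank strictly less than s can be written as y = y₁y₂ where y₁, y₂ ∈ M_n(K) both have rank exactly s. -/
open Matrix

open Module LinearMap in
lemma stmt_1_normal_form {n : ℕ} {K : Type*} [Field K] (y : Matrix (Fin n) (Fin n) K) :
    ∃ P Q : Matrix (Fin n) (Fin n) K, IsUnit P.det ∧ IsUnit Q.det ∧
      y = P * Matrix.diagonal (fun i : Fin n => if (i : ℕ) < y.rank then (1 : K) else 0) * Q := by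
  classical
  set r := y.rank with hr
  let f : (Fin n → K) →ₗ[K] (Fin n → K) := Matrix.toLin' y
  have hrange : finrank K (LinearMap.range f) = r := by
    rw [hr, Matrix.rank]
    congr 2
  have hrn : r + finrank K (LinearMap.ker f) = n := by
    have := LinearMap.finrank_range_add_finrank_ker f
    rwa [hrange, Module.finrank_fin_fun] at this
  obtain ⟨C, hC⟩ := (LinearMap.ker f).exists_isCompl
  obtain ⟨C₂, hC₂⟩ := (LinearMap.range f).exists_isCompl
  have hCker : finrank K (LinearMap.ker f) + finrank K C = n := by
    have := Submodule.finrank_add_eq_of_isCompl hC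
    rwa [Module.finrank_fin_fun] at this
  have hker : finrank K (LinearMap.ker f) = n - r := by omega
  have hCdim : finrank K C = r := by omega
  have hC₂dim : finrank K C₂ = n - r := by
    have := Submodule.finrank_add_eq_of_isCompl hC₂
    rw [Module.finrank_fin_fun, hrange] at this
    omega
  have hrle : r ≤ n := by omega
  -- the equivalence between C and the range of f
  let f' : C →ₗ[K] LinearMap.range f := f.rangeRestrict ∘ₗ C.subtype
  have hinj : Function.Injective f' := by
    rw [← LinearMap.ker_eq_bot]
    rw [Submodule.eq_bot_iff]
    rintro x hx
    have hfx : f (x : Fin n → K) = 0 := by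
      have : f.rangeRestrict (x : Fin n → K) = 0 := hx
      simpa [Subtype.ext_iff] using this
    have hxm : (x : Fin n → K) ∈ LinearMap.ker f := hfx
    have := (Submodule.disjoint_def.mp hC.disjoint) (x : Fin n → K) hxm x.2
    exact Subtype.ext this
  let ψ : C ≃ₗ[K] LinearMap.range f :=
    f'.linearEquivOfInjective hinj (by rw [hCdim, hrange])
  have hψ : ∀ x : C, ((ψ x : LinearMap.range f) : Fin n → K) = f (x : Fin n → K) := by
    intro x
    rw [LinearMap.linearEquivOfInjective_apply]
    rfl
  let bC : Basis (Fin r) K C := (finBasis K C).reindex (finCongr hCdim)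
  let bK : Basis (Fin (n - r)) K (LinearMap.ker f) :=
    (finBasis K (LinearMap.ker f)).reindex (finCongr hker)
  let b₂ : Basis (Fin (n - r)) K C₂ := (finBasis K C₂).reindex (finCongr hC₂dim)
  let c' : Basis (Fin r) K (LinearMap.range f) := bC.map ψ
  let e : (Fin r ⊕ Fin (n - r)) ≃ Fin n := finSumFinEquiv.trans (finCongr (by omega))
  let B : Basis (Fin n) K (Fin n → K) :=
    ((bC.prod bK).map (Submodule.prodEquivOfIsCompl _ _ hC.symm)).reindex e
  let B₂ : Basis (Fin n) K (Fin n → K) :=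
    ((c'.prod b₂).map (Submodule.prodEquivOfIsCompl _ _ hC₂)).reindex e
  have hB : ∀ i : Fin r ⊕ Fin (n - r),
      B (e i) = Sum.elim (fun i => (bC i : Fin n → K)) (fun j => (bK j : Fin n → K)) i := by
    rintro (i | j) <;>
      simp [B, Basis.prod_apply, Submodule.coe_prodEquivOfIsCompl']
  have hB₂ : ∀ i : Fin r,
      B₂ (e (Sum.inl i)) = ((c' i : LinearMap.range f) : Fin n → K) := by
    intro i
    simp [B₂, Basis.prod_apply, Submodule.coe_prodEquivOfIsCompl']
  have hM : LinearMap.toMatrix B B₂ f =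
      Matrix.diagonal (fun i : Fin n => if (i : ℕ) < r then (1 : K) else 0) := by
    ext i j
    rw [LinearMap.toMatrix_apply]
    have hj : j = e (e.symm j) := (e.apply_symm_apply j).symm
    rcases hj' : e.symm j with j₀ | j₁
    · -- column in the "image" part
      have hfBj : f (B j) = B₂ j := by
        conv_lhs => rw [hj, hj']
        rw [hB (Sum.inl j₀)]
        simp only [Sum.elim_inl]
        rw [← hψ (bC j₀)]
        conv_rhs => rw [hj, hj']
        rw [hB₂ j₀]
        rfl
      rw [hfBj, Basis.repr_self, Finsupp.single_apply]
      have hjv : (j : ℕ) = (j₀ : ℕ) := by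
        conv_lhs => rw [hj, hj']
        simp [e]
      have hjr : (j : ℕ) < r := by rw [hjv]; exact j₀.2
      rw [Matrix.diagonal_apply]
      by_cases hij : i = j
      · simp [hij, hjr]
      · simp [hij, Ne.symm hij]
    · -- column in the "kernel" part
      have hfBj : f (B j) = 0 := by
        conv_lhs => rw [hj, hj']
        rw [hB (Sum.inr j₁)]
        simpa using (bK j₁).2
      rw [hfBj]
      have hjv : (j : ℕ) = r + (j₁ : ℕ) := by
        conv_lhs => rw [hj, hj']
        simp [e]
      rw [Matrix.diagonal_apply]
      by_cases hij : i = j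
      · simp [hij, hjv, map_zero]
      · simp [hij, map_zero]
  refine ⟨(Pi.basisFun K (Fin n)).toMatrix B₂, B.toMatrix (Pi.basisFun K (Fin n)), ?_, ?_, ?_⟩
  · exact Matrix.isUnit_det_of_right_inverse (Basis.toMatrix_mul_toMatrix_flip _ _)
  · exact Matrix.isUnit_det_of_right_inverse (Basis.toMatrix_mul_toMatrix_flip _ _)
  · rw [← hM, basis_toMatrix_mul_linearMap_toMatrix_mul_basis_toMatrix,
      LinearMap.toMatrix_eq_toMatrix', LinearMap.toMatrix'_toLin']

theorem stmt_1 {n s : ℕ} (K : Type*) [Field K]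
    (hn : 2 ≤ n) (hs : 2 * s ≤ n)
    (y : Matrix (Fin n) (Fin n) K) (hy : y.rank < s) :
    ∃ y₁ y₂ : Matrix (Fin n) (Fin n) K, y₁.rank = s ∧ y₂.rank = s ∧ y = y₁ * y₂ := by
  classical
  set r := y.rank with hr
  have hrs : r < s := hy
  have hsn : s ≤ n := by omega
  obtain ⟨P, Q, hP, hQ, hPQ⟩ := stmt_1_normal_form y
  rw [← hr] at hPQ
  let g : ℕ → ℕ := fun i =>
    if r ≤ i ∧ i < s then i + (s - r)
    else if s ≤ i ∧ i < 2 * s - r then i - (s - r) else i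
  have hglt : ∀ i, i < n → g i < n := by
    intro i hi; simp only [g]; split_ifs <;> omega
  have hgg : ∀ i, i < n → g (g i) = i := by
    intro i hi; simp only [g]; split_ifs <;> omega
  let σ : Fin n ≃ Fin n :=
    ⟨fun i => ⟨g i, hglt i i.2⟩, fun i => ⟨g i, hglt i i.2⟩,
      fun i => Fin.ext (hgg i i.2), fun i => Fin.ext (hgg i i.2)⟩
  let w : Fin n → K := fun i => if (i : ℕ) < s then 1 else 0
  let E₁ : Matrix (Fin n) (Fin n) K := Matrix.diagonal w
  let E₂ : Matrix (Fin n) (Fin n) K := E₁.submatrix σ (Equiv.refl (Fin n))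
  have hσ : ∀ i : Fin n, ((σ i : Fin n) : ℕ) = g (i : ℕ) := fun _ => rfl
  have hE : E₁ * E₂ = Matrix.diagonal (fun i : Fin n => if (i : ℕ) < r then (1 : K) else 0) := by
    ext i j
    rw [Matrix.diagonal_mul]
    simp only [E₂, E₁, Matrix.submatrix_apply, Equiv.refl_apply, Matrix.diagonal_apply]
    rcases Nat.lt_or_ge (i : ℕ) r with hir | hir
    · have hgi : σ i = i := by
        apply Fin.ext; rw [hσ]; simp only [g]; split_ifs <;> omega
      rw [hgi]
      have his : (i : ℕ) < s := by omega
      by_cases hij : i = j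
      · subst hij; simp [w, his, hir]
      · rw [if_neg hij, mul_zero, if_neg hij]
    · rcases Nat.lt_or_ge (i : ℕ) s with his | his
      · -- r ≤ i < s : row of E₂ lands in the zero part of w
        have hσi : ¬ (((σ i : Fin n) : ℕ) < s) := by
          rw [hσ]; simp only [g]; split_ifs <;> omega
        have h1 : ¬ ((i : ℕ) < r) := by omega
        have hwσ : w (σ i) = 0 := by simp [w, hσi]
        by_cases hσj : σ i = j
        · rw [if_pos hσj] at *
          rw [hwσ, mul_zero]
          simp [h1]
        · rw [if_neg hσj, mul_zero]
          simp [h1]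
      · have h1 : ¬ ((i : ℕ) < s) := by omega
        have h2 : ¬ ((i : ℕ) < r) := by omega
        have hwi : w i = 0 := by simp [w, h1]
        rw [hwi, zero_mul]
        simp [h2]
  have hE₁rank : E₁.rank = s := by
    rw [Matrix.rank_diagonal]
    have he : {i : Fin n // w i ≠ 0} ≃ Fin s :=
      { toFun := fun i => ⟨(i.1 : ℕ), by
          have := i.2; by_contra h; simp only [w] at this; rw [if_neg h] at this; exact this rfl⟩
        invFun := fun j => ⟨⟨(j : ℕ), lt_of_lt_of_le j.2 hsn⟩, by
          simp only [w]; rw [if_pos j.2]; exact one_ne_zero⟩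
        left_inv := fun i => Subtype.ext (Fin.ext rfl)
        right_inv := fun j => rfl }
    rw [Fintype.card_congr he, Fintype.card_fin]
  have hE₂rank : E₂.rank = s := by
    rw [show E₂ = E₁.submatrix σ (Equiv.refl (Fin n)) from rfl, Matrix.rank_submatrix, hE₁rank]
  refine ⟨P * E₁, E₂ * Q, ?_, ?_, ?_⟩
  · rw [Matrix.rank_mul_eq_right_of_isUnit_det P E₁ hP, hE₁rank]
  · rw [Matrix.rank_mul_eq_left_of_isUnit_det Q E₂ hQ, hE₂rank]
  · rw [hPQ, ← hE]; simp only [Matrix.mul_assoc]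
end

section
/- Let n ≥ 2 and 1 ≤ s ≤ n/2 be integers and K a field. If δ : M_n(K) → M_n(K) satisfies δ(xy) = δ(x)y + xδ(y) for all x, y ∈ M_n(K) of rank exactly s, then δ(0) = 0. -/
open Matrix
open Finset

/-! If `x * u = u` and `u * u = 0` with `x, u ∈ S`, expanding `δ 0 = δ (u * u)` and
`δ u = δ (x * u)` gives `x * δ 0 = δ 0`. Take a rank-`s` diagonal idempotent `e` and a permutation
matrix `P` moving its support off itself (possible as `2 s ≤ n`), so that `e P e = 0`. The pairs
`(e, e P)` and `(P e P⁻¹, P e)` then give `δ 0 = e δ 0 = e (P e P⁻¹) δ 0 = 0`, and all four matrices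
have rank `s`. -/

def IsMulDerivationOn {R : Type*} [Mul R] [Add R] (S : Set R) (δ : R → R) : Prop :=
  ∀ x ∈ S, ∀ y ∈ S, δ (x * y) = δ x * y + x * δ y

namespace IsMulDerivationOn

variable {R : Type*} [Ring R] {S : Set R} {δ : R → R}

theorem mul_map_zero_of_mul_eq_self (hδ : IsMulDerivationOn S δ) {x u : R} (hx : x ∈ S)
    (hu : u ∈ S) (hxu : x * u = u) (huu : u * u = 0) : x * δ 0 = δ 0 := by
  have hδu : δ u * u = x * (δ u * u) := by
    calc δ u * u = (δ x * u + x * δ u) * u := by rw [← hδ x hx u hu, hxu]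
      _ = x * (δ u * u) := by rw [add_mul, mul_assoc, huu, mul_zero, zero_add, mul_assoc]
  have hδ0 : δ 0 = δ u * u + u * δ u := by rw [← huu, hδ u hu u hu]
  rw [hδ0, mul_add, ← hδu, ← mul_assoc, hxu]

theorem map_zero_eq_zero_of_isIdempotentElem (hδ : IsMulDerivationOn S δ)
    (hS : ∀ a b : Rˣ, ∀ x ∈ S, ↑a * x * ↑b ∈ S) {e : R} (he : IsIdempotentElem e) (heS : e ∈ S)
    (P : Rˣ) (hePe : e * P * e = 0) : δ 0 = 0 := by
  have hPe : ↑P * e ∈ S := by simpa using hS P 1 e heS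
  have heP : e * ↑P ∈ S := by simpa using hS 1 P e heS
  have he0 : e * δ 0 = δ 0 := hδ.mul_map_zero_of_mul_eq_self heS heP
    (by rw [← mul_assoc, he.eq]) (by rw [← mul_assoc, hePe, zero_mul])
  have hf0 : (↑P * e * ↑P⁻¹) * δ 0 = δ 0 := hδ.mul_map_zero_of_mul_eq_self (hS P P⁻¹ e heS) hPe
    (by simp [mul_assoc, he.eq]) (by rw [mul_assoc, ← mul_assoc e, hePe, mul_zero])
  calc δ 0 = e * ((↑P * e * ↑P⁻¹) * δ 0) := by rw [hf0, he0]
    _ = 0 := by rw [← mul_assoc, ← mul_assoc, ← mul_assoc, hePe]; simp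

end IsMulDerivationOn

theorem Finset.exists_perm_forall_apply_notMem {ι : Type*} [Fintype ι] [DecidableEq ι]
    (A : Finset ι) (hA : 2 * #A ≤ Fintype.card ι) : ∃ σ : Equiv.Perm ι, ∀ i ∈ A, σ i ∉ A := by
  obtain ⟨B, hBA, hB⟩ := exists_subset_card_eq (s := Aᶜ) (n := #A) (by rw [card_compl]; omega)
  obtain ⟨σ, hσ⟩ := Equiv.Perm.exists_map_finset_eq A B hB.symm
  exact ⟨σ, fun i hi => mem_compl.mp (hBA (hσ ▸ mem_map_of_mem _ hi))⟩

namespace Matrix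

variable {ι K : Type*} [Fintype ι] [DecidableEq ι] [Field K]

theorem rank_units_mul_mul_units (a b : (Matrix ι ι K)ˣ) (x : Matrix ι ι K) :
    ((a : Matrix ι ι K) * x * b).rank = x.rank := by
  rw [rank_mul_eq_left_of_isUnit_det _ _ ((isUnit_iff_isUnit_det _).mp b.isUnit),
    rank_mul_eq_right_of_isUnit_det _ _ ((isUnit_iff_isUnit_det _).mp a.isUnit)]

theorem isUnit_permMatrix {R : Type*} [CommRing R] (σ : Equiv.Perm ι) :
    IsUnit (σ.permMatrix R) := by
  rw [isUnit_iff_isUnit_det, det_permutation]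
  exact (Equiv.Perm.sign σ).isUnit.map (Int.castRingHom R)

theorem isIdempotentElem_diagonal_ite (A : Finset ι) :
    IsIdempotentElem (diagonal fun i => if i ∈ A then (1 : K) else 0) := by
  unfold IsIdempotentElem
  rw [diagonal_mul_diagonal]
  congr 1
  ext i
  split_ifs <;> simp

theorem rank_diagonal_ite (A : Finset ι) :
    (diagonal fun i => if i ∈ A then (1 : K) else 0).rank = #A := by
  classical
  simp [rank_diagonal]

theorem diagonal_ite_mul_permMatrix_mul_diagonal_ite {A : Finset ι} {σ : Equiv.Perm ι}
    (hσ : ∀ i ∈ A, σ i ∉ A) :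
    diagonal (fun i => if i ∈ A then (1 : K) else 0) * σ.permMatrix K *
      diagonal (fun i => if i ∈ A then (1 : K) else 0) = 0 := by
  ext i j
  simp only [mul_diagonal, diagonal_mul, PEquiv.toMatrix_apply, Equiv.toPEquiv_apply,
    Option.mem_def, Option.some.injEq, zero_apply]
  grind

end Matrix

theorem IsMulDerivationOn.map_zero_eq_zero_of_rank_eq {ι K : Type*} [Fintype ι] [DecidableEq ι]
    [Field K] {s : ℕ} (hs : 2 * s ≤ Fintype.card ι) {δ : Matrix ι ι K → Matrix ι ι K}
    (hδ : IsMulDerivationOn {x | x.rank = s} δ) : δ 0 = 0 := by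
  obtain ⟨A, -, hA⟩ := exists_subset_card_eq (s := (univ : Finset ι)) (n := s)
    (by rw [card_univ]; omega)
  obtain ⟨σ, hσ⟩ := A.exists_perm_forall_apply_notMem (by rwa [hA])
  exact hδ.map_zero_eq_zero_of_isIdempotentElem
    (fun a b x hx => (rank_units_mul_mul_units a b x).trans hx)
    (isIdempotentElem_diagonal_ite A) ((rank_diagonal_ite A).trans hA) (isUnit_permMatrix σ).unit
    (diagonal_ite_mul_permMatrix_mul_diagonal_ite hσ)

theorem stmt_3_general {n s : ℕ} (K : Type*) [Field K]
    (hs2 : 2 * s ≤ n)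
    (δ : Matrix (Fin n) (Fin n) K → Matrix (Fin n) (Fin n) K)
    (hδ : ∀ x y : Matrix (Fin n) (Fin n) K,
      x.rank = s → y.rank = s → δ (x * y) = δ x * y + x * δ y) :
    δ 0 = 0 :=
  IsMulDerivationOn.map_zero_eq_zero_of_rank_eq (by simpa using hs2)
    fun x hx y hy => hδ x y hx hy

theorem stmt_3 {n s : ℕ} (K : Type*) [Field K]
    (hn : 2 ≤ n) (hs1 : 1 ≤ s) (hs2 : 2 * s ≤ n)
    (δ : Matrix (Fin n) (Fin n) K → Matrix (Fin n) (Fin n) K)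
    (hδ : ∀ x y : Matrix (Fin n) (Fin n) K,
      x.rank = s → y.rank = s → δ (x * y) = δ x * y + x * δ y) :
    δ 0 = 0 :=
  stmt_3_general K hs2 δ hδ
end

section
/- Let n ≥ 2 and 1 ≤ s ≤ n/2 be integers and K a field. If δ : M_n(K) → M_n(K) satisfies δ(xy) = δ(x)y + xδ(y) for all x, y of rank exactly s, then δ(xy) = δ(x)y + xδ(y) holds for all x, y ∈ M_n(K) with rank(x) ≤ s, rank(y) ≤ s, and min(rank(x), rank(y)) ≤ 1. -/
/-!
A map `D` satisfying the Leibniz rule on pairs of rank exactly `s` is handled by factoring.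
When `2 s ≤ n`, every `f` of rank at most `s` factors as `f = c d` with `c` and `d` of rank
exactly `s`, where the kernel of `d` (any subspace of `ker f` of codimension `s`) and the image
of `c` (`range f` plus any complement of the right dimension) can be prescribed. With these
choices no rank is lost in the products that occur, so the Leibniz rule `L(x,y)` follows from
the rule for rank-`s` pairs through `L(c,d), L(d,b), L(c,db) ⟹ L(cd,b)` and its mirror image,
as soon as `x y` has the rank of `x` or of `y`. If `x y = 0`, factor `x = a b` and `y = c d` with
`b c = 0`: then `D x y + x D y = a D(0) d`, and `D 0 = 0` because `D 0 v` lies in the image of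
every rank-`s` map `c` with `c d = 0` and `d v = 0`. Finally, if `min (rank x, rank y) ≤ 1`,
either `x y = 0` or `x y` has the rank of the factor of rank one.
-/

open Matrix

open Module LinearMap

section Subspaces

variable {K V W : Type*} [Field K] [AddCommGroup V] [Module K V] [FiniteDimensional K V]
  [AddCommGroup W] [Module K W]

theorem Submodule.finrank_sup_of_disjoint {A B : Submodule K V} (h : Disjoint A B) :
    finrank K ↥(A ⊔ B) = finrank K A + finrank K B := by
  have h' := Submodule.finrank_sup_add_finrank_inf_eq A B
  rwa [h.eq_bot, finrank_bot, add_zero] at h'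

theorem Submodule.finrank_map_add_finrank_inf_ker (f : V →ₗ[K] W) (B : Submodule K V) :
    finrank K (B.map f) + finrank K ↥(B ⊓ ker f) = finrank K B := by
  have h := finrank_range_add_finrank_ker (f ∘ₗ B.subtype)
  rw [range_comp, Submodule.range_subtype, ker_comp, ← Submodule.finrank_map_subtype_eq,
    Submodule.map_comap_subtype] at h
  exact h

theorem Submodule.exists_le_finrank_eq {B : Submodule K V} {k : ℕ} (hk : k ≤ finrank K B) :
    ∃ U ≤ B, finrank K U = k := by
  obtain ⟨ι, hι⟩ := finrank_le_iff_exists_linearMap.mp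
    (show finrank K (Fin k → K) ≤ finrank K B by simpa using hk)
  refine ⟨range (B.subtype ∘ₗ ι), (range_comp_le_range _ _).trans B.range_subtype.le, ?_⟩
  rw [finrank_range_of_inj fun a b hab => hι (Subtype.ext hab), finrank_fin_fun]

theorem Submodule.exists_le_disjoint_finrank_eq {B : Submodule K V} (C : Submodule K V) {k : ℕ}
    (hk : k + finrank K ↥(B ⊓ C) ≤ finrank K B) :
    ∃ U ≤ B, Disjoint U C ∧ finrank K U = k := by
  obtain ⟨E, hdisj, hsup⟩ :=
    IsModularLattice.exists_disjoint_and_sup_eq (inf_le_left : B ⊓ C ≤ B)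
  have hEB : E ≤ B := hsup ▸ le_sup_right
  have hEC : Disjoint E C := by
    rw [disjoint_iff, ← inf_eq_left.mpr hEB, inf_assoc]
    exact hdisj.symm.eq_bot
  have hE := Submodule.finrank_sup_of_disjoint hdisj
  rw [hsup] at hE
  obtain ⟨U, hUE, hU⟩ := exists_le_finrank_eq (B := E) (k := k) (by omega)
  exact ⟨U, hUE.trans hEB, hEC.mono_left hUE, hU⟩

theorem Submodule.exists_le_le_finrank_eq {A B : Submodule K V} (hAB : A ≤ B) {k : ℕ}
    (hAk : finrank K A ≤ k) (hkB : k ≤ finrank K B) :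
    ∃ U, A ≤ U ∧ U ≤ B ∧ finrank K U = k := by
  obtain ⟨U, hUB, hdisj, hU⟩ := exists_le_disjoint_finrank_eq (B := B) A (k := k - finrank K A)
    (by rw [inf_eq_right.mpr hAB]; omega)
  refine ⟨A ⊔ U, le_sup_left, sup_le hAB hUB, ?_⟩
  rw [finrank_sup_of_disjoint hdisj.symm]
  omega

end Subspaces

section Factorization

variable {K V : Type*} [Field K] [AddCommGroup V] [Module K V] [FiniteDimensional K V]

theorem Submodule.exists_linearMap_range_eq_of_finrank_le {N Q : Submodule K V}
    (h : finrank K Q ≤ finrank K N) : ∃ g : N →ₗ[K] V, range g = Q := by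
  obtain ⟨ι, hι⟩ := finrank_le_iff_exists_linearMap.mp h
  obtain ⟨r, hr⟩ := ι.exists_leftInverse_of_injective (ker_eq_bot.mpr hι)
  have hr_surj : Function.Surjective r := fun q => ⟨ι q, LinearMap.congr_fun hr q⟩
  refine ⟨Q.subtype ∘ₗ r, ?_⟩
  rw [range_comp, range_eq_top.mpr hr_surj, Submodule.map_top, Submodule.range_subtype]

theorem Module.End.exists_mul_eq_of_le_ker (f : Module.End K V) {N : Submodule K V}
    (hN : N ≤ ker f) {Q : Submodule K V} (hQ : finrank K Q ≤ finrank K N) :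
    ∃ c d : Module.End K V, c * d = f ∧ ker d = N ∧ range c = range f ⊔ Q := by
  obtain ⟨P, hNP⟩ := N.exists_isCompl
  obtain ⟨g, hg⟩ := Submodule.exists_linearMap_range_eq_of_finrank_le hQ
  refine ⟨ofIsCompl hNP.symm (f ∘ₗ P.subtype) g, P.projection N hNP.symm, ?_,
    Submodule.ker_projection _, ?_⟩
  · ext v
    have hN_v : f (N.projection P hNP v) = 0 := hN (Submodule.projection_apply_mem _ v)
    rw [Module.End.mul_apply, ← Submodule.coe_projectionOnto_apply, ofIsCompl_apply_left,
      LinearMap.comp_apply, Submodule.subtype_apply, Submodule.coe_projectionOnto_apply]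
    conv_rhs => rw [← Submodule.projection_add_projection_eq_self hNP.symm v]
    rw [map_add, hN_v, add_zero]
  · rw [range_ofIsCompl, hg, range_comp, Submodule.range_subtype, ← Submodule.map_top,
      ← hNP.sup_eq_top, Submodule.map_sup, le_ker_iff_map.mp hN, bot_sup_eq]

theorem Module.End.exists_mul_eq_finrank_range_eq {s : ℕ} (hs : 2 * s ≤ finrank K V)
    (f : Module.End K V) {N : Submodule K V} (hN : N ≤ ker f)
    (hNs : finrank K N + s = finrank K V) {Q : Submodule K V} (hfQ : Disjoint (range f) Q)
    (hQs : finrank K Q + finrank K (range f) = s) :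
    ∃ c d : Module.End K V, c * d = f ∧ ker d = N ∧ range c = range f ⊔ Q ∧
      finrank K (range c) = s ∧ finrank K (range d) = s := by
  obtain ⟨c, d, hcd, hd, hc⟩ := f.exists_mul_eq_of_le_ker hN (Q := Q) (by omega)
  refine ⟨c, d, hcd, hd, hc, ?_, ?_⟩
  · rw [hc, Submodule.finrank_sup_of_disjoint hfQ]
    omega
  · have := finrank_range_add_finrank_ker d
    rw [hd] at this
    omega

theorem Module.End.exists_mul_eq_of_finrank_range_le {s : ℕ} (hs : 2 * s ≤ finrank K V)
    {f : Module.End K V} (hf : finrank K (range f) ≤ s) :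
    ∃ c d : Module.End K V,
      c * d = f ∧ finrank K (range c) = s ∧ finrank K (range d) = s := by
  have hnull := finrank_range_add_finrank_ker f
  obtain ⟨N, hNf, hN⟩ := Submodule.exists_le_finrank_eq (B := ker f) (k := finrank K V - s)
    (by omega)
  obtain ⟨Q, -, hfQ, hQ⟩ := Submodule.exists_le_disjoint_finrank_eq (B := ⊤) (range f)
    (k := s - finrank K (range f)) (by rw [top_inf_eq, finrank_top]; omega)
  obtain ⟨c, d, hcd, -, -, hc, hd⟩ :=
    exists_mul_eq_finrank_range_eq hs f hNf (by omega) hfQ.symm (by omega)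
  exact ⟨c, d, hcd, hc, hd⟩

theorem Module.End.finrank_range_mul_le_left (f g : Module.End K V) :
    finrank K (range (f * g)) ≤ finrank K (range f) :=
  Submodule.finrank_mono (range_comp_le_range g f)

theorem Module.End.finrank_range_mul_le_right (f g : Module.End K V) :
    finrank K (range (f * g)) ≤ finrank K (range g) := by
  rw [Module.End.mul_eq_comp, range_comp]
  exact Submodule.finrank_map_le f _

theorem Module.End.finrank_range_mul_add_finrank_inf_ker (f g : Module.End K V) :
    finrank K (range (f * g)) + finrank K ↥(range g ⊓ ker f) = finrank K (range g) := by
  rw [Module.End.mul_eq_comp, range_comp]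
  exact Submodule.finrank_map_add_finrank_inf_ker f _

end Factorization

section Leibniz

variable {A : Type*} [Ring A]

def LeibnizAt (D : A → A) (x y : A) : Prop :=
  D (x * y) = D x * y + x * D y

namespace LeibnizAt

variable {D : A → A} {a b c d : A}

theorem mul_left (hab : LeibnizAt D a b) (hbc : LeibnizAt D b c)
    (habc : LeibnizAt D a (b * c)) : LeibnizAt D (a * b) c := by
  unfold LeibnizAt at *
  rw [mul_assoc, habc, hbc, hab]
  noncomm_ring

theorem mul_right (hbc : LeibnizAt D b c) (hab : LeibnizAt D a b)
    (habc : LeibnizAt D (a * b) c) : LeibnizAt D a (b * c) := by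
  unfold LeibnizAt at *
  rw [← mul_assoc, habc, hab, hbc]
  noncomm_ring

theorem mul_mul_of_mul_eq_zero (hD0 : D 0 = 0) (hab : LeibnizAt D a b) (hbc : LeibnizAt D b c)
    (hcd : LeibnizAt D c d) (hbc0 : b * c = 0) : LeibnizAt D (a * b) (c * d) := by
  unfold LeibnizAt at *
  rw [hbc0, hD0] at hbc
  have habcd : a * b * (c * d) = 0 := by rw [mul_assoc, ← mul_assoc b, hbc0, zero_mul, mul_zero]
  rw [habcd, hD0, hab, hcd]
  calc (0 : A) = a * (D b * c + b * D c) * d + D a * (b * c) * d + a * (b * c) * D d := by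
        rw [← hbc, hbc0]; simp
    _ = _ := by noncomm_ring

end LeibnizAt

theorem leibnizAt_conj_iff {B : Type*} [Ring B] (e : A ≃+* B) (D : A → A) (x y : A) :
    LeibnizAt (e ∘ D ∘ e.symm) (e x) (e y) ↔ LeibnizAt D x y := by
  simp only [LeibnizAt, Function.comp_apply, ← map_mul, ← map_add, e.symm_apply_apply,
    e.injective.eq_iff]

end Leibniz

section RankLeibniz

variable {K V : Type*} [Field K] [AddCommGroup V] [Module K V] [FiniteDimensional K V]

def IsLeibnizOnRank (s : ℕ) (D : Module.End K V → Module.End K V) : Prop :=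
  ∀ f g : Module.End K V, finrank K (range f) = s → finrank K (range g) = s → LeibnizAt D f g

namespace IsLeibnizOnRank

open Module.End

variable {s : ℕ} {D : Module.End K V → Module.End K V}

theorem map_zero (hD : IsLeibnizOnRank s D) (hs : 2 * s ≤ finrank K V) : D 0 = 0 := by
  have mem_of_finrank_eq : ∀ v : V, ∀ U : Submodule K V, finrank K U = s → D 0 v ∈ U := by
    intro v U hU
    have hv₁ : finrank K (K ∙ v) ≤ 1 := by
      simpa using finrank_span_le_card (R := K) ({v} : Set V)
    have hv₂ : finrank K (K ∙ v) ≤ finrank K V := Submodule.finrank_le _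
    obtain ⟨N, hvN, -, hN⟩ := Submodule.exists_le_le_finrank_eq (le_top : K ∙ v ≤ ⊤)
      (k := finrank K V - s) (by omega) (by rw [finrank_top]; omega)
    obtain ⟨c, d, hcd, hd, hc, hcs, hds⟩ := exists_mul_eq_finrank_range_eq hs 0 (N := N)
      (by simp) (by omega) (Q := U) (by simp) (by rw [range_zero, finrank_bot, add_zero, hU])
    have hdv : d v = 0 := by
      rw [← mem_ker, hd]
      exact hvN (Submodule.mem_span_singleton_self v)
    have hLeib : D 0 = D c * d + c * D d := hcd ▸ hD c d hcs hds
    rw [hLeib, LinearMap.add_apply, Module.End.mul_apply, Module.End.mul_apply, hdv,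
      _root_.map_zero, zero_add]
    simpa [hc] using mem_range_self c (D d v)
  refine LinearMap.ext fun v => ?_
  obtain ⟨U₁, -, hU₁⟩ := Submodule.exists_le_finrank_eq (B := (⊤ : Submodule K V)) (k := s)
    (by rw [finrank_top]; omega)
  obtain ⟨U₂, -, hU, hU₂⟩ := Submodule.exists_le_disjoint_finrank_eq (B := ⊤) U₁ (k := s)
    (by rw [top_inf_eq, finrank_top]; omega)
  exact Submodule.disjoint_def.mp hU _ (mem_of_finrank_eq v U₂ hU₂)
    (mem_of_finrank_eq v U₁ hU₁)

theorem leibnizAt_of_finrank_range_mul_eq_left_of_finrank_eq (hD : IsLeibnizOnRank s D)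
    (hs : 2 * s ≤ finrank K V) {x b : Module.End K V} (hb : finrank K (range b) = s)
    (hxb : finrank K (range (x * b)) = finrank K (range x)) : LeibnizAt D x b := by
  have hx := finrank_range_add_finrank_ker x
  have hbx := finrank_range_mul_add_finrank_inf_ker x b
  obtain ⟨N, hNx, hNb, hN⟩ := Submodule.exists_le_disjoint_finrank_eq (B := ker x) (range b)
    (k := finrank K V - s) (by rw [inf_comm]; omega)
  obtain ⟨Q, -, hxQ, hQ⟩ := Submodule.exists_le_disjoint_finrank_eq (B := ⊤) (range x)
    (k := s - finrank K (range x)) (by rw [top_inf_eq, finrank_top]; omega)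
  obtain ⟨c, d, rfl, hd, -, hcs, hds⟩ :=
    exists_mul_eq_finrank_range_eq hs x hNx (by omega) hxQ.symm (by omega)
  have hdb : finrank K (range (d * b)) = s := by
    have := finrank_range_mul_add_finrank_inf_ker d b
    rw [hd, hNb.symm.eq_bot, finrank_bot] at this
    omega
  exact (hD c d hcs hds).mul_left (hD d b hds hb) (hD c (d * b) hcs hdb)

theorem leibnizAt_of_finrank_range_mul_eq_right_of_finrank_eq (hD : IsLeibnizOnRank s D)
    (hs : 2 * s ≤ finrank K V) {a y : Module.End K V} (ha : finrank K (range a) = s)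
    (hay : finrank K (range (a * y)) = finrank K (range y)) : LeibnizAt D a y := by
  have hya : Disjoint (range y) (ker a) := by
    have := finrank_range_mul_add_finrank_inf_ker a y
    rw [disjoint_iff, ← Submodule.finrank_eq_zero]
    omega
  have ha' := finrank_range_add_finrank_ker a
  have hy := finrank_range_add_finrank_ker y
  have hys := hay ▸ finrank_range_mul_le_left a y
  obtain ⟨N, hNy, hN⟩ := Submodule.exists_le_finrank_eq (B := ker y) (k := finrank K V - s)
    (by omega)
  obtain ⟨Q, -, hQ, hQs⟩ := Submodule.exists_le_disjoint_finrank_eq (B := ⊤) (range y ⊔ ker a)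
    (k := s - finrank K (range y))
    (by rw [top_inf_eq, finrank_top, Submodule.finrank_sup_of_disjoint hya]; omega)
  obtain ⟨c, d, rfl, -, hc, hcs, hds⟩ :=
    exists_mul_eq_finrank_range_eq hs y hNy (by omega) (hQ.mono_right le_sup_left).symm (by omega)
  have hca : Disjoint (range c) (ker a) := by
    rw [hc, sup_comm]
    exact hya.disjoint_sup_left_of_disjoint_sup_right hQ
  have hac : finrank K (range (a * c)) = s := by
    have := finrank_range_mul_add_finrank_inf_ker a c
    rw [hca.eq_bot, finrank_bot] at this
    omega
  exact (hD c d hcs hds).mul_right (hD a c ha hcs) (hD (a * c) d hac hds)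

theorem leibnizAt_of_finrank_range_mul_eq_left (hD : IsLeibnizOnRank s D)
    (hs : 2 * s ≤ finrank K V) {x y : Module.End K V} (hy : finrank K (range y) ≤ s)
    (hxy : finrank K (range (x * y)) = finrank K (range x)) : LeibnizAt D x y := by
  obtain ⟨c, d, rfl, hc, hd⟩ := exists_mul_eq_of_finrank_range_le hs hy
  have hxc : finrank K (range (x * c)) = finrank K (range x) := by
    have := finrank_range_mul_le_left (x * c) d
    have := finrank_range_mul_le_left x c
    rw [mul_assoc] at *
    omega
  have hxcd : finrank K (range (x * c * d)) = finrank K (range (x * c)) := by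
    rw [hxc, mul_assoc, hxy]
  exact (hD c d hc hd).mul_right (hD.leibnizAt_of_finrank_range_mul_eq_left_of_finrank_eq hs hc hxc)
    (hD.leibnizAt_of_finrank_range_mul_eq_left_of_finrank_eq hs hd hxcd)

theorem leibnizAt_of_finrank_range_mul_eq_right (hD : IsLeibnizOnRank s D)
    (hs : 2 * s ≤ finrank K V) {x y : Module.End K V} (hx : finrank K (range x) ≤ s)
    (hxy : finrank K (range (x * y)) = finrank K (range y)) : LeibnizAt D x y := by
  obtain ⟨a, b, rfl, ha, hb⟩ := exists_mul_eq_of_finrank_range_le hs hx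
  have hby : finrank K (range (b * y)) = finrank K (range y) := by
    have := finrank_range_mul_le_right a (b * y)
    have := finrank_range_mul_le_right b y
    rw [← mul_assoc] at *
    omega
  have haby : finrank K (range (a * (b * y))) = finrank K (range (b * y)) := by
    rw [hby, ← mul_assoc, hxy]
  exact (hD a b ha hb).mul_left (hD.leibnizAt_of_finrank_range_mul_eq_right_of_finrank_eq hs hb hby)
    (hD.leibnizAt_of_finrank_range_mul_eq_right_of_finrank_eq hs ha haby)

theorem leibnizAt_of_mul_eq_zero (hD : IsLeibnizOnRank s D) (hs : 2 * s ≤ finrank K V)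
    {x y : Module.End K V} (hx : finrank K (range x) ≤ s) (hy : finrank K (range y) ≤ s)
    (hxy : x * y = 0) : LeibnizAt D x y := by
  have hyx : range y ≤ ker x := range_le_ker_iff.mpr hxy
  have hx' := finrank_range_add_finrank_ker x
  have hy' := finrank_range_add_finrank_ker y
  obtain ⟨N, hNy, hN⟩ := Submodule.exists_le_finrank_eq (B := ker y) (k := finrank K V - s)
    (by omega)
  obtain ⟨Q, hQx, hyQ, hQ⟩ := Submodule.exists_le_disjoint_finrank_eq (B := ker x) (range y)
    (k := s - finrank K (range y)) (by rw [inf_eq_right.mpr hyx]; omega)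
  obtain ⟨c, d, rfl, -, hc, hcs, hds⟩ :=
    exists_mul_eq_finrank_range_eq hs y hNy (by omega) hyQ.symm (by omega)
  obtain ⟨N', hcN', hN'x, hN'⟩ := Submodule.exists_le_le_finrank_eq (hc ▸ sup_le hyx hQx)
    (k := finrank K V - s) (by omega) (by omega)
  obtain ⟨Q', -, hxQ', hQ'⟩ := Submodule.exists_le_disjoint_finrank_eq (B := ⊤) (range x)
    (k := s - finrank K (range x)) (by rw [top_inf_eq, finrank_top]; omega)
  obtain ⟨a, b, rfl, hb, -, has, hbs⟩ :=
    exists_mul_eq_finrank_range_eq hs x hN'x (by omega) hxQ'.symm (by omega)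
  have hbc : b * c = 0 := range_le_ker_iff.mp (hb ▸ hcN')
  exact LeibnizAt.mul_mul_of_mul_eq_zero (hD.map_zero hs) (hD a b has hbs) (hD b c hbs hcs)
    (hD c d hcs hds) hbc

theorem leibnizAt_of_min_finrank_range_le_one (hD : IsLeibnizOnRank s D)
    (hs : 2 * s ≤ finrank K V) {x y : Module.End K V} (hx : finrank K (range x) ≤ s)
    (hy : finrank K (range y) ≤ s) (hxy : min (finrank K (range x)) (finrank K (range y)) ≤ 1) :
    LeibnizAt D x y := by
  by_cases hxy0 : x * y = 0
  · exact hD.leibnizAt_of_mul_eq_zero hs hx hy hxy0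
  have hpos : finrank K (range (x * y)) ≠ 0 := fun h =>
    hxy0 (range_eq_bot.mp (Submodule.finrank_eq_zero.mp h))
  have := finrank_range_mul_le_left x y
  have := finrank_range_mul_le_right x y
  rcases min_le_iff.mp hxy with h | h
  · exact hD.leibnizAt_of_finrank_range_mul_eq_left hs hy (by omega)
  · exact hD.leibnizAt_of_finrank_range_mul_eq_right hs hx (by omega)

end IsLeibnizOnRank

end RankLeibniz

theorem stmt_5_general {n s : ℕ} (K : Type*) [Field K]
    (hs2 : 2 * s ≤ n)
    (δ : Matrix (Fin n) (Fin n) K → Matrix (Fin n) (Fin n) K)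
    (hδ : ∀ x y : Matrix (Fin n) (Fin n) K,
      x.rank = s → y.rank = s → δ (x * y) = δ x * y + x * δ y) :
    ∀ x y : Matrix (Fin n) (Fin n) K,
      x.rank ≤ s → y.rank ≤ s → min x.rank y.rank ≤ 1 →
      δ (x * y) = δ x * y + x * δ y := by
  intro x y hx hy hxy
  let e := (Matrix.toLinAlgEquiv' : Matrix (Fin n) (Fin n) K ≃ₐ[K] _).toRingEquiv
  have hrank (m : Matrix (Fin n) (Fin n) K) : m.rank = finrank K (range (e m)) := rfl
  have hD : IsLeibnizOnRank s (e ∘ δ ∘ e.symm) := by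
    intro f g hf hg
    rw [← e.apply_symm_apply f, ← e.apply_symm_apply g, leibnizAt_conj_iff]
    exact hδ _ _ (by rwa [hrank, e.apply_symm_apply]) (by rwa [hrank, e.apply_symm_apply])
  rw [hrank, hrank y] at hxy
  exact (leibnizAt_conj_iff e δ x y).mp (hD.leibnizAt_of_min_finrank_range_le_one
    (by rwa [finrank_fin_fun]) (hrank x ▸ hx) (hrank y ▸ hy) hxy)

theorem stmt_5 {n s : ℕ} (K : Type*) [Field K]
    (hn : 2 ≤ n) (hs1 : 1 ≤ s) (hs2 : 2 * s ≤ n)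
    (δ : Matrix (Fin n) (Fin n) K → Matrix (Fin n) (Fin n) K)
    (hδ : ∀ x y : Matrix (Fin n) (Fin n) K,
      x.rank = s → y.rank = s → δ (x * y) = δ x * y + x * δ y) :
    ∀ x y : Matrix (Fin n) (Fin n) K,
      x.rank ≤ s → y.rank ≤ s → min x.rank y.rank ≤ 1 →
      δ (x * y) = δ x * y + x * δ y :=
  stmt_5_general K hs2 δ hδ
end

section
/- Let n ≥ 2 and 1 ≤ s ≤ n/2 be integers and K a field. Suppose δ : M_n(K) → M_n(K) satisfies δ(xy) = δ(x)y + xδ(y) for all x, y with rank ≤ s and min(rank x, rank y) ≤ 1. Define B = Σ_{i=1}^n δ(e_{ii})e_{ii}. Then δ(e_{ii}) = Be_{ii} − e_{ii}B = [B, e_{ii}] for every i. -/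
/-!
The diagonal units `eᵢᵢ` form a complete family of orthogonal idempotents of rank one, so `δ`
satisfies the Leibniz rule on every product `eᵢᵢ eⱼⱼ`. For any such family `eᵢ` in a ring,
writing `δ(eᵢ) = δ(eᵢ) · ∑ⱼ eⱼ`, each summand `δ(eᵢ) eⱼ` equals `δ(eⱼ) eⱼ eᵢ - eᵢ δ(eⱼ) eⱼ`:
for `j ≠ i` because `eᵢ δ(eⱼ) = -δ(eᵢ) eⱼ` (Leibniz on `eᵢ eⱼ = 0`), and for `j = i` because
`eᵢ δ(eᵢ) eᵢ = 0` (Leibniz on `eᵢ² = eᵢ`). Summing over `j` gives `δ(eᵢ) = [B, eᵢ]`.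
-/

open Matrix

section Leibniz

variable {R : Type*} [Ring R] {δ : R → R}

theorem IsIdempotentElem.mul_mul_self_eq_zero_of_leibniz {e : R} (he : IsIdempotentElem e)
    (hδ : δ (e * e) = δ e * e + e * δ e) : e * δ e * e = 0 := by
  rw [he.eq] at hδ
  have h := congrArg (· * e) hδ
  simp only [add_mul, mul_assoc, he.eq] at h
  rw [mul_assoc]
  simpa using h

theorem mul_leibniz_eq_neg_of_mul_eq_zero (hδ0 : δ 0 = 0) {a b : R} (hab : a * b = 0)
    (hδ : δ (a * b) = δ a * b + a * δ b) : a * δ b = -(δ a * b) := by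
  rw [hab, hδ0] at hδ
  exact eq_neg_of_add_eq_zero_right hδ.symm

theorem CompleteOrthogonalIdempotents.eq_commutator_of_leibniz {ι : Type*} [Fintype ι]
    {e : ι → R} (he : CompleteOrthogonalIdempotents e) (hδ0 : δ 0 = 0)
    (hδ : ∀ i j, δ (e i * e j) = δ (e i) * e j + e i * δ (e j)) (i : ι) :
    δ (e i) = (∑ j, δ (e j) * e j) * e i - e i * ∑ j, δ (e j) * e j := by
  have hterm : ∀ j, δ (e j) * e j * e i - e i * (δ (e j) * e j) = δ (e i) * e j := by
    intro j
    rcases eq_or_ne j i with rfl | hji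
    · rw [mul_assoc, (he.idem j).eq, ← mul_assoc,
        (he.idem j).mul_mul_self_eq_zero_of_leibniz (hδ j j), sub_zero]
    · rw [mul_assoc, he.ortho hji, mul_zero, ← mul_assoc,
        mul_leibniz_eq_neg_of_mul_eq_zero hδ0 (he.ortho hji.symm) (hδ i j),
        neg_mul, mul_assoc, (he.idem j).eq, zero_sub, neg_neg]
  calc δ (e i) = δ (e i) * ∑ j, e j := by rw [he.complete, mul_one]
    _ = ∑ j, (δ (e j) * e j * e i - e i * (δ (e j) * e j)) := by
      rw [Finset.mul_sum]
      exact Finset.sum_congr rfl fun j _ => (hterm j).symm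
    _ = (∑ j, δ (e j) * e j) * e i - e i * ∑ j, δ (e j) * e j := by
      rw [Finset.sum_sub_distrib, Finset.sum_mul, Finset.mul_sum]

end Leibniz

namespace Matrix

theorem completeOrthogonalIdempotents_single_one {m α : Type*} [Fintype m] [DecidableEq m]
    [Semiring α] : CompleteOrthogonalIdempotents (fun i : m => single i i (1 : α)) where
  idem i := by simp [IsIdempotentElem, single_mul_single_same]
  ortho i j hij := by exact single_mul_single_of_ne (c := 1) i i j hij 1
  complete := sum_single_one

theorem rank_single_one_le {m n R : Type*} [Fintype n] [DecidableEq m] [DecidableEq n]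
    [CommRing R] [StrongRankCondition R] (i : m) (j : n) : (single i j (1 : R)).rank ≤ 1 := by
  rw [single_eq_single_vecMulVec_single]
  exact rank_vecMulVec_le _ _

end Matrix

theorem stmt_8_general {n s : ℕ} (K : Type*) [Field K]
    (hs1 : 1 ≤ s)
    (δ : Matrix (Fin n) (Fin n) K → Matrix (Fin n) (Fin n) K)
    (hδ : ∀ x y : Matrix (Fin n) (Fin n) K,
      x.rank ≤ s → y.rank ≤ s → min x.rank y.rank ≤ 1 →
      δ (x * y) = δ x * y + x * δ y)
    (B : Matrix (Fin n) (Fin n) K)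
    (hB : B = ∑ i : Fin n, δ (single i i (1 : K)) * single i i (1 : K)) :
    ∀ i : Fin n,
      δ (single i i (1 : K)) =
        B * single i i (1 : K) - single i i (1 : K) * B := by
  have hδ0 : δ 0 = 0 := by simpa using hδ 0 0 (by simp) (by simp) (by simp)
  have hrank (i : Fin n) : (single i i (1 : K)).rank ≤ 1 := rank_single_one_le i i
  subst hB
  exact completeOrthogonalIdempotents_single_one.eq_commutator_of_leibniz hδ0 fun i j =>
    hδ _ _ ((hrank i).trans hs1) ((hrank j).trans hs1) ((min_le_left _ _).trans (hrank i))

theorem stmt_8 {n s : ℕ} (K : Type*) [Field K]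
    (hn : 2 ≤ n) (hs1 : 1 ≤ s) (hs2 : 2 * s ≤ n)
    (δ : Matrix (Fin n) (Fin n) K → Matrix (Fin n) (Fin n) K)
    (hδ : ∀ x y : Matrix (Fin n) (Fin n) K,
      x.rank ≤ s → y.rank ≤ s → min x.rank y.rank ≤ 1 →
      δ (x * y) = δ x * y + x * δ y)
    (B : Matrix (Fin n) (Fin n) K)
    (hB : B = ∑ i : Fin n, δ (single i i (1 : K)) * single i i (1 : K)) :
    ∀ i : Fin n,
      δ (single i i (1 : K)) =
        B * single i i (1 : K) - single i i (1 : K) * B :=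
  stmt_8_general K hs1 δ hδ B hB
end

section
/- Let n ≥ 2 and 1 ≤ s ≤ n/2 be integers and K a field. Suppose δ' : M_n(K) → M_n(K) satisfies δ'(xy) = δ'(x)y + xδ'(y) for all x, y with rank ≤ s and min(rank x, rank y) ≤ 1, and δ'(e_{ij}) = 0 for all standard matrix units e_{ij}. Then for each a ∈ K and all i, j there is a scalar μ(a) independent of i, j such that δ'(a·e_{ij}) = μ(a)e_{ij}, and μ : K → K satisfies μ(ab) = aμ(b) + μ(a)b and μ(a+b) = μ(a) + μ(b) for all a, b ∈ K; that is, μ is a derivation of the field K. -/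
open Matrix

/-!
Since `δ` kills the units, `δ(a e_ij) = e_ii δ(a e_ij) e_jj` is a multiple `μ(a) e_ij`, and
moving `a e_ij` to other positions by multiplying with units shows `μ(a)` does not depend on
`(i, j)`. The Leibniz rule for `a e_kk · b e_kk` is the product rule for `μ`, and for `i ≠ j`
the factorisation `(e_ii + a e_ij)(b e_ij + e_jj) = (a + b) e_ij` into rank-one factors gives
additivity.
-/

namespace Matrix

variable {ι R : Type*} [Fintype ι] [DecidableEq ι] [CommRing R] [StrongRankCondition R]

theorem rank_single_one_mul_le_one (i k : ι) (M : Matrix ι ι R) :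
    (single i k (1 : R) * M).rank ≤ 1 :=
  (rank_mul_le_left _ _).trans <|
    single_eq_single_vecMulVec_single (α := R) i k ▸ rank_vecMulVec_le _ _

theorem rank_mul_single_one_le_one (k j : ι) (M : Matrix ι ι R) :
    (M * single k j (1 : R)).rank ≤ 1 :=
  (rank_mul_le_right _ _).trans <|
    single_eq_single_vecMulVec_single (α := R) k j ▸ rank_vecMulVec_le _ _

theorem rank_single_le_one (i j : ι) (a : R) : (single i j a).rank ≤ 1 := by
  simpa using rank_single_one_mul_le_one i i (single i j a)

structure IsUnitNormalizedLeibnizOnRankOne (δ : Matrix ι ι R → Matrix ι ι R) : Prop where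
  map_mul : ∀ x y : Matrix ι ι R, x.rank ≤ 1 → y.rank ≤ 1 → δ (x * y) = δ x * y + x * δ y
  map_single_one : ∀ i j : ι, δ (single i j 1) = 0

namespace IsUnitNormalizedLeibnizOnRankOne

variable {δ : Matrix ι ι R → Matrix ι ι R} (hδ : IsUnitNormalizedLeibnizOnRankOne δ)
include hδ

theorem map_mul_single {x : Matrix ι ι R} (hx : x.rank ≤ 1) (k l : ι) :
    δ (x * single k l 1) = δ x * single k l 1 := by
  rw [hδ.map_mul _ _ hx (rank_single_le_one k l 1), hδ.map_single_one, mul_zero, add_zero]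

theorem map_single_mul {x : Matrix ι ι R} (hx : x.rank ≤ 1) (k l : ι) :
    δ (single k l 1 * x) = single k l 1 * δ x := by
  rw [hδ.map_mul _ _ (rank_single_le_one k l 1) hx, hδ.map_single_one, zero_mul, zero_add]

theorem map_single_eq_smul (i j : ι) (a : R) :
    δ (single i j a) = δ (single i j a) i j • single i j 1 := by
  have hx := rank_single_le_one i j a
  calc δ (single i j a) = single i i 1 * δ (single i j a) * single j j 1 := by
        rw [← hδ.map_single_mul hx, ← hδ.map_mul_single (by simpa using hx)]
        simp
    _ = _ := by simp [smul_single]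

theorem map_single_apply_col (i j k : ι) (a : R) :
    δ (single i j a) i j = δ (single i k a) i k := by
  have h := hδ.map_mul_single (rank_single_le_one i k a) k j
  rw [single_mul_single_same, mul_one] at h
  rw [h, mul_single_apply_same, mul_one]

theorem map_single_apply_row (i j k : ι) (a : R) :
    δ (single i j a) i j = δ (single k j a) k j := by
  have h := hδ.map_single_mul (rank_single_le_one k j a) i k
  rw [single_mul_single_same, one_mul] at h
  rw [h, single_mul_apply_same, one_mul]

theorem map_single (i j k : ι) (a : R) :
    δ (single i j a) = δ (single k k a) k k • single i j 1 := by
  rw [hδ.map_single_eq_smul, hδ.map_single_apply_col i j k, hδ.map_single_apply_row i k k]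

theorem map_single_mul_single (k : ι) (a b : R) :
    δ (single k k (a * b)) k k = a * δ (single k k b) k k + δ (single k k a) k k * b := by
  rw [← single_mul_single_same (c := a) k k k b,
    hδ.map_mul _ _ (rank_single_le_one k k a) (rank_single_le_one k k b)]
  simp only [add_apply, mul_single_apply_same, single_mul_apply_same]
  ring

theorem map_single_add {i j : ι} (hij : i ≠ j) (a b : R) :
    δ (single i j (a + b)) = δ (single i j a) + δ (single i j b) := by
  set u := single i i 1 + a • single i j (1 : R)
  set v := b • single i j (1 : R) + single j j 1
  have hu : u.rank ≤ 1 := by simpa [u, mul_add] using rank_single_one_mul_le_one i i u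
  have hv : v.rank ≤ 1 := by simpa [v, add_mul] using rank_mul_single_one_le_one j j v
  have huv : u * v = single i j (a + b) := by
    simp [u, v, hij, hij.symm, mul_add, add_mul, single_add, add_comm]
  have hδu : δ u * v = δ (single i j a) := by
    rw [mul_add, mul_smul_comm, ← hδ.map_mul_single hu, ← hδ.map_mul_single hu]
    simp [u, hij, hij.symm, add_mul, hδ.map_single_one]
  have hδv : u * δ v = δ (single i j b) := by
    rw [add_mul, smul_mul_assoc, ← hδ.map_single_mul hv, ← hδ.map_single_mul hv]
    simp [v, hij, hij.symm, mul_add, hδ.map_single_one]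
  rw [← huv, hδ.map_mul u v hu hv, hδu, hδv]

theorem exists_derivation [Nontrivial ι] :
    ∃ μ : R → R,
      (∀ (a : R) (i j : ι), δ (a • single i j (1 : R)) = μ a • single i j (1 : R)) ∧
      (∀ a b : R, μ (a * b) = a * μ b + μ a * b) ∧
      (∀ a b : R, μ (a + b) = μ a + μ b) := by
  obtain ⟨i, j, hij⟩ := exists_pair_ne ι
  refine ⟨fun a ↦ δ (single i i a) i i, fun a k l ↦ ?_, hδ.map_single_mul_single i,
    fun a b ↦ ?_⟩
  · rw [smul_single, smul_eq_mul, mul_one]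
    exact hδ.map_single k l i a
  · simp only [hδ.map_single_apply_col i i j, hδ.map_single_add hij, add_apply]

end IsUnitNormalizedLeibnizOnRankOne

end Matrix

theorem stmt_11_general {n s : ℕ} (K : Type*) [Field K]
    (hn : 2 ≤ n) (hs1 : 1 ≤ s)
    (δ' : Matrix (Fin n) (Fin n) K → Matrix (Fin n) (Fin n) K)
    (hδ : ∀ x y : Matrix (Fin n) (Fin n) K,
      x.rank ≤ s → y.rank ≤ s → min x.rank y.rank ≤ 1 →
      δ' (x * y) = δ' x * y + x * δ' y)
    (hunits : ∀ i j : Fin n, δ' (single i j (1 : K)) = 0) :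
    ∃ μ : K → K,
      (∀ (a : K) (i j : Fin n),
        δ' (a • single i j (1 : K)) = μ a • single i j (1 : K)) ∧
      (∀ a b : K, μ (a * b) = a * μ b + μ a * b) ∧
      (∀ a b : K, μ (a + b) = μ a + μ b) := by
  have : Nontrivial (Fin n) := Fin.nontrivial_iff_two_le.mpr hn
  have hδ' : IsUnitNormalizedLeibnizOnRankOne δ' :=
    ⟨fun x y hx hy ↦ hδ x y (hx.trans hs1) (hy.trans hs1) ((min_le_left _ _).trans hx), hunits⟩
  exact hδ'.exists_derivation

theorem stmt_11 {n s : ℕ} (K : Type*) [Field K]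
    (hn : 2 ≤ n) (hs1 : 1 ≤ s) (hs2 : 2 * s ≤ n)
    (δ' : Matrix (Fin n) (Fin n) K → Matrix (Fin n) (Fin n) K)
    (hδ : ∀ x y : Matrix (Fin n) (Fin n) K,
      x.rank ≤ s → y.rank ≤ s → min x.rank y.rank ≤ 1 →
      δ' (x * y) = δ' x * y + x * δ' y)
    (hunits : ∀ i j : Fin n, δ' (single i j (1 : K)) = 0) :
    ∃ μ : K → K,
      (∀ (a : K) (i j : Fin n),
        δ' (a • single i j (1 : K)) = μ a • single i j (1 : K)) ∧
      (∀ a b : K, μ (a * b) = a * μ b + μ a * b) ∧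
      (∀ a b : K, μ (a + b) = μ a + μ b) :=
  stmt_11_general K hn hs1 δ' hδ hunits
end

section
/- Let n ≥ 2 and 1 ≤ s ≤ n/2 be integers and K a field. Suppose δ : M_n(K) → M_n(K) satisfies δ(xy) = δ(x)y + xδ(y) for all x, y of rank ≤ s with min(rank x, rank y) ≤ 1, and suppose δ(e_{ij}) = 0 for all matrix units. Then for any x = (x_{ij}) ∈ M_n(K) of rank ≤ s and any i, j, the matrix e_{ii}δ(x)e_{jj} equals δ(x_{ij}e_{ij}); in particular δ(x) is determined entrywise by the values δ(a·e_{11}) for a ∈ K. -/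
/-! Since `e_ii x` has rank at most one, the Leibniz rule applies to both products in
`e_ii * x * e_jj`; as `δ` kills matrix units this gives `δ (e_ii x e_jj) = e_ii δ(x) e_jj`,
and `e_ii x e_jj = x_ij e_ij`. -/

open Matrix

theorem Matrix.rank_single_one_le_one {m n R : Type*} [Fintype n] [DecidableEq m]
    [DecidableEq n] [CommSemiring R] [StrongRankCondition R] (i : m) (j : n) :
    (single i j (1 : R)).rank ≤ 1 := by
  rw [single_eq_single_vecMulVec_single]
  exact rank_vecMulVec_le _ _

theorem map_mul_mul_of_leibniz {A : Type*} [NonUnitalNonAssocSemiring A] (δ : A → A)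
    {e f x : A} (hex : δ (e * x) = δ e * x + e * δ x)
    (hexf : δ (e * x * f) = δ (e * x) * f + e * x * δ f) (he : δ e = 0) (hf : δ f = 0) :
    δ (e * x * f) = e * δ x * f := by
  rw [hexf, hex, he, hf, zero_mul, zero_add, mul_zero, add_zero]

theorem stmt_18_general {n s : ℕ} (K : Type*) [Field K]
    (hs1 : 1 ≤ s)
    (δ : Matrix (Fin n) (Fin n) K → Matrix (Fin n) (Fin n) K)
    (hδ : ∀ x y : Matrix (Fin n) (Fin n) K,
      x.rank ≤ s → y.rank ≤ s → min x.rank y.rank ≤ 1 →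
      δ (x * y) = δ x * y + x * δ y)
    (hunits : ∀ i j : Fin n, δ (single i j (1 : K)) = 0) :
    ∀ x : Matrix (Fin n) (Fin n) K, x.rank ≤ s →
      ∀ i j : Fin n,
        single i i (1 : K) * δ x * single j j (1 : K) =
          δ (x i j • single i j (1 : K)) := by
  intro x hx i j
  have hunit_rank (a b : Fin n) : (single a b (1 : K)).rank ≤ 1 := rank_single_one_le_one a b
  have hrow_rank : (single i i (1 : K) * x).rank ≤ 1 :=
    (rank_mul_le_left _ _).trans (hunit_rank i i)
  have hcompress := map_mul_mul_of_leibniz δ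
    (hδ _ _ ((hunit_rank i i).trans hs1) hx (min_le_of_left_le (hunit_rank i i)))
    (hδ _ _ (hrow_rank.trans hs1) ((hunit_rank j j).trans hs1) (min_le_of_left_le hrow_rank))
    (hunits i i) (hunits j j)
  rw [single_mul_mul_single, one_mul, mul_one] at hcompress
  rw [← hcompress, smul_single, smul_eq_mul, mul_one]

theorem stmt_18 {n s : ℕ} (K : Type*) [Field K]
    (hn : 2 ≤ n) (hs1 : 1 ≤ s) (hs2 : 2 * s ≤ n)
    (δ : Matrix (Fin n) (Fin n) K → Matrix (Fin n) (Fin n) K)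
    (hδ : ∀ x y : Matrix (Fin n) (Fin n) K,
      x.rank ≤ s → y.rank ≤ s → min x.rank y.rank ≤ 1 →
      δ (x * y) = δ x * y + x * δ y)
    (hunits : ∀ i j : Fin n, δ (single i j (1 : K)) = 0) :
    ∀ x : Matrix (Fin n) (Fin n) K, x.rank ≤ s →
      ∀ i j : Fin n,
        single i i (1 : K) * δ x * single j j (1 : K) =
          δ (x i j • single i j (1 : K)) :=
  stmt_18_general K hs1 δ hδ hunits
end

section
/- Let K be a field and n ≥ 2. Let μ : K → K satisfy μ(ab) = aμ(b) + μ(a)b for all a, b ∈ K, μ(1) = 0, and suppose μ arises as above from a map δ' with δ'(a e_{ij}) = μ(a)e_{ij} and δ'((a+b)e_{11}) = δ'((e_{11}+e_{12})(ae_{11}+be_{21})) computed via the derivation rule on matrices of rank ≤ 2 ≤ n. Then μ(a+b) = μ(a) + μ(b) for all a, b ∈ K, i.e., the identity δ'((e_{11}+e_{12})(ae_{11}+be_{21})) = (e_{11}+e_{12})(μ(a)e_{11}+μ(b)e_{21}) forces additivity of μ. -/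
/-!
Put `u = E₁₁ + E₁₂` and `v = a E₁₁ + b E₂₁`, both of rank one, so that `u v = (a + b) E₁₁`.
Since `δ'` kills the matrix units, the Leibniz rule on rank-one pairs gives `δ'(u) E₁₁ = δ'(E₁₁) = 0`
and `δ'(u) E₂₁ = δ'(E₁₁) = 0`, while `E₁₁ δ'(v) = δ'(a E₁₁)` and `E₁₂ δ'(v) = δ'(b E₁₁)`. Hence
`μ(a + b) E₁₁ = δ'(u v) = δ'(u) v + u δ'(v) = (μ(a) + μ(b)) E₁₁`.
-/

open Matrix

namespace Matrix

variable {m K : Type*} [Fintype m] [DecidableEq m] [CommRing K] [StrongRankCondition K]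

theorem rank_single_one_le_s19 (i j : m) : (single i j (1 : K)).rank ≤ 1 :=
  single_eq_single_vecMulVec_single (α := K) i j ▸ rank_vecMulVec_le _ _

theorem rank_single_one_mul_le (i j : m) (A : Matrix m m K) : (single i j 1 * A).rank ≤ 1 :=
  (rank_mul_le_left _ _).trans (rank_single_one_le_s19 i j)

theorem rank_mul_single_one_le (i j : m) (A : Matrix m m K) : (A * single i j 1).rank ≤ 1 :=
  (rank_mul_le_right _ _).trans (rank_single_one_le_s19 i j)

section RankOneLeibniz

variable {δ : Matrix m m K → Matrix m m K}
  (hδ : ∀ x y : Matrix m m K, x.rank ≤ 1 → y.rank ≤ 1 → δ (x * y) = δ x * y + x * δ y)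
  (hunits : ∀ i j : m, δ (single i j 1) = 0)
include hδ hunits

theorem map_mul_single_one {x : Matrix m m K} (hx : x.rank ≤ 1) (i j : m) :
    δ (x * single i j 1) = δ x * single i j 1 := by
  rw [hδ x _ hx (rank_single_one_le_s19 i j), hunits, mul_zero, add_zero]

theorem map_single_one_mul {y : Matrix m m K} (hy : y.rank ≤ 1) (i j : m) :
    δ (single i j 1 * y) = single i j 1 * δ y := by
  rw [hδ _ y (rank_single_one_le_s19 i j) hy, hunits, zero_mul, zero_add]

theorem map_add_of_map_smul_single {μ : K → K} {i j : m} (hij : i ≠ j)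
    (hμδ : ∀ a : K, δ (a • single i i 1) = μ a • single i i 1) (a b : K) :
    μ (a + b) = μ a + μ b := by
  set u : Matrix m m K := single i i 1 + single i j 1
  set v : Matrix m m K := a • single i i 1 + b • single j i 1
  have hu : u.rank ≤ 1 := by
    simpa [u, mul_add] using rank_single_one_mul_le (K := K) i i u
  have hv : v.rank ≤ 1 := by
    simpa [v, add_mul, hij.symm] using rank_mul_single_one_le (K := K) i i v
  have huv : u * v = (a + b) • single i i 1 := by
    simp [u, v, add_mul, mul_add, hij, hij.symm, add_smul]
  have hδu : δ u * v = 0 := by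
    have hi : u * single i i 1 = single i i 1 := by
      simp [u, add_mul, hij.symm]
    have hj : u * single j i 1 = single i i 1 := by
      simp [u, add_mul, hij]
    rw [mul_add, mul_smul_comm, mul_smul_comm, ← map_mul_single_one hδ hunits hu, hi,
      ← map_mul_single_one hδ hunits hu, hj, hunits, smul_zero, smul_zero, add_zero]
  have hδv : u * δ v = (μ a + μ b) • single i i 1 := by
    have hi : single i i 1 * v = a • single i i 1 := by
      simp [v, mul_add, hij]
    have hj : single i j 1 * v = b • single i i 1 := by
      simp [v, mul_add, hij.symm]
    rw [add_mul, ← map_single_one_mul hδ hunits hv, hi, ← map_single_one_mul hδ hunits hv, hj,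
      hμδ, hμδ, add_smul]
  have key := hδ u v hu hv
  rw [huv, hμδ, hδu, hδv, zero_add] at key
  simpa using congrFun (congrFun key i) i

end RankOneLeibniz

end Matrix

theorem stmt_19_general {n s : ℕ} (K : Type*) [Field K]
    (hn : 4 ≤ n) (hs1 : 2 ≤ s)
    (δ' : Matrix (Fin n) (Fin n) K → Matrix (Fin n) (Fin n) K)
    (hδ : ∀ x y : Matrix (Fin n) (Fin n) K,
      x.rank ≤ s → y.rank ≤ s → min x.rank y.rank ≤ 1 →
      δ' (x * y) = δ' x * y + x * δ' y)
    (hunits : ∀ i j : Fin n, δ' (Matrix.single i j (1 : K)) = 0)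
    (μ : K → K)
    (hμδ : ∀ (a : K) (i j : Fin n),
      δ' (a • Matrix.single i j (1 : K)) = μ a • Matrix.single i j (1 : K)) :
    ∀ a b : K, μ (a + b) = μ a + μ b := by
  have hδ₁ : ∀ x y : Matrix (Fin n) (Fin n) K, x.rank ≤ 1 → y.rank ≤ 1 →
      δ' (x * y) = δ' x * y + x * δ' y := fun x y hx hy =>
    hδ x y (by omega) (by omega) ((min_le_left _ _).trans hx)
  have h01 : (⟨0, by omega⟩ : Fin n) ≠ ⟨1, by omega⟩ := by simp
  exact map_add_of_map_smul_single hδ₁ hunits h01 fun a => hμδ a _ _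

theorem stmt_19 {n s : ℕ} (K : Type*) [Field K]
    (hn : 4 ≤ n) (hs1 : 2 ≤ s) (hs2 : 2 * s ≤ n)
    (δ' : Matrix (Fin n) (Fin n) K → Matrix (Fin n) (Fin n) K)
    (hδ : ∀ x y : Matrix (Fin n) (Fin n) K,
      x.rank ≤ s → y.rank ≤ s → min x.rank y.rank ≤ 1 →
      δ' (x * y) = δ' x * y + x * δ' y)
    (hunits : ∀ i j : Fin n, δ' (Matrix.single i j (1 : K)) = 0)
    (μ : K → K)
    (hμδ : ∀ (a : K) (i j : Fin n),
      δ' (a • Matrix.single i j (1 : K)) = μ a • Matrix.single i j (1 : K))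
    (hmul : ∀ a b : K, μ (a * b) = a * μ b + μ a * b)
    (hone : μ 1 = 0) :
    ∀ a b : K, μ (a + b) = μ a + μ b :=
  stmt_19_general K hn hs1 δ' hδ hunits μ hμδ
end
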